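/- arXiv:2404.01267 — 5 statements merged into one kernel-verified Lean document; each statement's English description precedes it below -/
import Mathlib

section
/- Suppose f : ℝ^d → ℝ is μ-strongly convex and twice continuously differentiable, with L-Lipschitz gradient, where 0 < μ < L. For any x, y ∈ ℝ^d, f(x) - f(y) - ∇f(y)ᵀ(x-y) ≥ ‖∇f(x) - ∇f(y)‖²/(2(L-μ)) + μL‖x-y‖²/(2(L-μ)) - (μ/(L-μ)) (∇f(y) - ∇f(x))ᵀ(y-x). -/
/-!
Subtracting `μ / 2 * ‖·‖ ^ 2` turns `f` into a convex function `h` whose gradient satisfies the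
one-sided bound `⟪∇h a - ∇h b, a - b⟫ ≤ (L - μ) * ‖a - b‖ ^ 2`. For such an `h`, the first-order
lower bound at `y` and the descent-lemma upper bound at `x`, both evaluated at the point
`z = x - (∇h x - ∇h y) / (L - μ)`, give
`h x - h y - ⟪∇h y, x - y⟫ ≥ ‖∇h x - ∇h y‖ ^ 2 / (2 * (L - μ))`.
Rewritten in terms of `f`, this is the interpolation inequality.
-/

open scoped InnerProductSpace
open Set AffineMap

section

variable {E : Type*} [NormedAddCommGroup E] [InnerProductSpace ℝ E]

theorem LipschitzWith.inner_sub_smul_sub_le {g : E → E} {K : NNReal} (hg : LipschitzWith K g)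
    (μ : ℝ) (a b : E) :
    ⟪(g a - μ • a) - (g b - μ • b), a - b⟫_ℝ ≤ (K - μ) * ‖a - b‖ ^ 2 := by
  have hsplit : (g a - μ • a) - (g b - μ • b) = (g a - g b) - μ • (a - b) := by module
  rw [hsplit, inner_sub_left, real_inner_smul_left, real_inner_self_eq_norm_sq]
  have hCS := real_inner_le_norm (g a - g b) (a - b)
  have hlip := hg.norm_sub_le a b
  nlinarith [norm_nonneg (a - b)]

variable [CompleteSpace E]

theorem HasGradientAt.hasDerivAt_comp_lineMap {f : E → ℝ} {f' a b : E} {t : ℝ}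
    (hf : HasGradientAt f f' (lineMap a b t)) :
    HasDerivAt (fun s => f (lineMap a b s)) ⟪f', b - a⟫_ℝ t :=
  (hasGradientAt_iff_hasFDerivAt.mp hf).comp_hasDerivAt t hasDerivAt_lineMap

theorem HasGradientAt.sub_half_mul_sq_norm {f : E → ℝ} {f' x : E} (hf : HasGradientAt f f' x)
    (μ : ℝ) : HasGradientAt (fun z => f z - μ / 2 * ‖z‖ ^ 2) (f' - μ • x) x := by
  rw [hasGradientAt_iff_hasFDerivAt] at hf ⊢
  refine (hf.sub ((hasStrictFDerivAt_norm_sq x).hasFDerivAt.const_mul (μ / 2))).congr_fderiv ?_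
  ext v
  simp only [sub_apply, InnerProductSpace.toDual_apply_apply, smul_apply, coe_innerSL_apply,
    nsmul_eq_mul, Nat.cast_ofNat, smul_eq_mul, map_sub, map_smul, sub_right_inj]
  ring

theorem ConvexOn.add_inner_le_of_hasGradientAt {s : Set E} {h : E → ℝ} {h' y z : E}
    (hc : ConvexOn ℝ s h) (hy : y ∈ s) (hz : z ∈ s) (hd : HasGradientAt h h' y) :
    h y + ⟪h', z - y⟫_ℝ ≤ h z := by
  have hslope := (hc.comp_affineMap (lineMap y z)).le_slope_of_hasDerivAt (x := 0) (y := 1)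
    (by simpa) (by simpa) one_pos (HasGradientAt.hasDerivAt_comp_lineMap (by simpa))
  simp only [slope, Function.comp_apply, lineMap_apply_zero, lineMap_apply_one, sub_zero,
    inv_one, one_smul, vsub_eq_sub] at hslope
  linarith

theorem le_add_inner_add_sq_of_inner_sub_le {F : E → ℝ} {F' : E → E} {K : ℝ}
    (hF : ∀ z, HasGradientAt F (F' z) z)
    (hK : ∀ a b, ⟪F' a - F' b, a - b⟫_ℝ ≤ K * ‖a - b‖ ^ 2) (x y : E) :
    F x ≤ F y + ⟪F' y, x - y⟫_ℝ + K / 2 * ‖x - y‖ ^ 2 := by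
  set v := x - y
  let φ : ℝ → ℝ := fun t => F (lineMap y x t) - t * ⟪F' y, v⟫_ℝ - K / 2 * ‖v‖ ^ 2 * t ^ 2
  have hφ (t : ℝ) :
      HasDerivAt φ (⟪F' (lineMap y x t), v⟫_ℝ - ⟪F' y, v⟫_ℝ - K * ‖v‖ ^ 2 * t) t := by
    have h1 := (hF (lineMap y x t)).hasDerivAt_comp_lineMap
    have h2 := (hasDerivAt_id t).mul_const ⟪F' y, v⟫_ℝ
    have h3 := (hasDerivAt_pow 2 t).const_mul (K / 2 * ‖v‖ ^ 2)
    refine ((h1.sub h2).sub h3).congr_deriv ?_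
    simp only [v]
    ring
  have hφ'_nonpos (t : ℝ) (ht : 0 < t) :
      ⟪F' (lineMap y x t), v⟫_ℝ - ⟪F' y, v⟫_ℝ - K * ‖v‖ ^ 2 * t ≤ 0 := by
    have hKt := hK (lineMap y x t) y
    have hstep : lineMap y x t - y = t • v := by rw [lineMap_apply_module', add_sub_cancel_right]
    rw [hstep, inner_smul_right, inner_sub_left, norm_smul, mul_pow, Real.norm_eq_abs,
      sq_abs] at hKt
    nlinarith
  have hanti : AntitoneOn φ (Ici 0) :=
    antitoneOn_of_hasDerivWithinAt_nonpos (convex_Ici 0)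
      (fun t _ => (hφ t).continuousAt.continuousWithinAt) (fun t _ => (hφ t).hasDerivWithinAt)
      (fun t ht => hφ'_nonpos t (by simpa using ht))
  have hφ10 : φ 1 ≤ φ 0 := hanti (mem_Ici.2 le_rfl) (mem_Ici.2 zero_le_one) zero_le_one
  simp only [φ, lineMap_apply_zero, lineMap_apply_one] at hφ10
  linarith

theorem ConvexOn.sq_norm_gradient_sub_div_le {h : E → ℝ} {h' : E → E} {K : ℝ} (hK : 0 < K)
    (hc : ConvexOn ℝ univ h) (hd : ∀ z, HasGradientAt h (h' z) z)
    (hl : ∀ a b, ⟪h' a - h' b, a - b⟫_ℝ ≤ K * ‖a - b‖ ^ 2) (x y : E) :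
    ‖h' x - h' y‖ ^ 2 / (2 * K) ≤ h x - h y - ⟪h' y, x - y⟫_ℝ := by
  set u := h' x - h' y
  set z := x - K⁻¹ • u
  have hlower := hc.add_inner_le_of_hasGradientAt (mem_univ y) (mem_univ z) (hd y)
  have hupper := le_add_inner_add_sq_of_inner_sub_le hd hl z x
  have hzy : z - y = (x - y) - K⁻¹ • u := by simp only [z]; abel
  have hzx : z - x = -(K⁻¹ • u) := by simp only [z]; abel
  rw [hzy, inner_sub_right, real_inner_smul_right] at hlower
  rw [hzx, inner_neg_right, real_inner_smul_right, norm_neg, norm_smul, mul_pow, Real.norm_eq_abs,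
    sq_abs] at hupper
  have hquad : K / 2 * (K⁻¹ ^ 2 * ‖u‖ ^ 2) = ‖u‖ ^ 2 / (2 * K) := by field_simp
  have hlin : K⁻¹ * ⟪h' x, u⟫_ℝ - K⁻¹ * ⟪h' y, u⟫_ℝ = 2 * (‖u‖ ^ 2 / (2 * K)) := by
    have huu : ⟪h' x, u⟫_ℝ - ⟪h' y, u⟫_ℝ = ‖u‖ ^ 2 := by
      rw [← inner_sub_left, real_inner_self_eq_norm_sq]
    rw [← mul_sub, huu]
    field_simp
  linarith

theorem StrongConvexOn.interpolation_of_lipschitzWith_gradient {f : E → ℝ} {μ : ℝ} {L : NNReal}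
    (hf : Differentiable ℝ f) (hsc : StrongConvexOn univ μ f)
    (hlip : LipschitzWith L (gradient f)) (hμL : μ < L) (x y : E) :
    ‖gradient f x - gradient f y‖ ^ 2 / (2 * (L - μ)) + μ * L * ‖x - y‖ ^ 2 / (2 * (L - μ)) -
        (μ / (L - μ)) * ⟪gradient f y - gradient f x, y - x⟫_ℝ ≤
      f x - f y - ⟪gradient f y, x - y⟫_ℝ := by
  have hK : 0 < (L : ℝ) - μ := sub_pos.2 hμL
  have key := (strongConvexOn_iff_convex.mp hsc).sq_norm_gradient_sub_div_le hK
    (fun z => (hf z).hasGradientAt.sub_half_mul_sq_norm μ) (hlip.inner_sub_smul_sub_le μ) x y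
  set g := gradient f
  have hu : (g x - μ • x) - (g y - μ • y) = (g x - g y) - μ • (x - y) := by module
  have hnorm : ‖(g x - g y) - μ • (x - y)‖ ^ 2 =
      ‖g x - g y‖ ^ 2 - 2 * μ * ⟪g x - g y, x - y⟫_ℝ + μ ^ 2 * ‖x - y‖ ^ 2 := by
    rw [norm_sub_sq_real, real_inner_smul_right, norm_smul, mul_pow, Real.norm_eq_abs, sq_abs]
    ring
  have hbregman : (f x - μ / 2 * ‖x‖ ^ 2) - (f y - μ / 2 * ‖y‖ ^ 2) - ⟪g y - μ • y, x - y⟫_ℝ =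
      f x - f y - ⟪g y, x - y⟫_ℝ - μ / 2 * ‖x - y‖ ^ 2 := by
    rw [inner_sub_left (g y), real_inner_smul_left, inner_sub_right y x y,
      real_inner_self_eq_norm_sq, norm_sub_sq_real, real_inner_comm x y]
    ring
  have hsymm : ⟪g y - g x, y - x⟫_ℝ = ⟪g x - g y, x - y⟫_ℝ := by
    rw [← neg_sub (g x), ← neg_sub x, inner_neg_neg]
  rw [hu, hnorm, hbregman] at key
  rw [hsymm]
  calc _ = (‖g x - g y‖ ^ 2 - 2 * μ * ⟪g x - g y, x - y⟫_ℝ + μ ^ 2 * ‖x - y‖ ^ 2) / (2 * (L - μ))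
        + μ / 2 * ‖x - y‖ ^ 2 := by field_simp; ring
    _ ≤ _ := by linarith

end

/-- Interpolation inequality for μ-strongly convex functions with L-Lipschitz gradient. -/
theorem interpolation_inequality {d : ℕ} (f : EuclideanSpace ℝ (Fin d) → ℝ) (μ L : ℝ)
    (hμ : 0 < μ) (hμL : μ < L) (hf : ContDiff ℝ 2 f)
    (hsc : StrongConvexOn Set.univ μ f)
    (hlip : LipschitzWith (Real.toNNReal L) (gradient f))
    (x y : EuclideanSpace ℝ (Fin d)) :
    f x - f y - ⟪gradient f y, x - y⟫_ℝ ≥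
      ‖gradient f x - gradient f y‖ ^ 2 / (2 * (L - μ)) +
      μ * L * ‖x - y‖ ^ 2 / (2 * (L - μ)) -
      (μ / (L - μ)) * ⟪gradient f y - gradient f x, y - x⟫_ℝ := by
  have hL : (Real.toNNReal L : ℝ) = L := Real.coe_toNNReal L (hμ.trans hμL).le
  have := hsc.interpolation_of_lipschitzWith_gradient (hf.differentiable two_ne_zero) hlip
    (by rwa [hL]) x y
  rwa [hL] at this
end

section
/- Let f : ℝ^d → ℝ be μ-strongly convex with L-Lipschitz gradient, 0 < μ < L, and let κ = L/μ. Suppose x_k, x_{k+1} ∈ ℝ^d satisfy the exact line search orthogonality condition ∇f(x_{k+1})ᵀ(x_{k+1} - x_k) = 0. Let s_k = x_{k+1} - x_k and y_k = ∇f(x_{k+1}) - ∇f(x_k). Then f(x_k) - f(x_{k+1}) ≥ (1/(1 + √κ)) s_kᵀ y_k. -/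
/-!
With `g = f - (μ/2)‖·‖²`, strong convexity of `f` makes `g` convex, and `L`-Lipschitz continuity
of `∇f` gives the quadratic upper bound `(L - μ)/2 ‖x - y‖²` on the Bregman divergence of `g`.
A convex function squeezed like this has a cocoercive gradient, which for `f` is the
interpolation inequality
`f x - f y - ⟪∇f y, x - y⟫ ≥ (‖∇f x - ∇f y‖² + μL‖x - y‖² - 2μ⟪∇f x - ∇f y, x - y⟫) / (2(L - μ))`.
At `x = x_k`, `y = x_{k+1}` the orthogonality condition kills the linear term on the left, and
Young's inequality with Cauchy–Schwarz bounds `‖y_k‖² + μL‖s_k‖²` below by `2√(μL) s_kᵀy_k`.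
-/

open scoped InnerProductSpace

open Set

section Bregman

variable {E : Type*} [NormedAddCommGroup E] [InnerProductSpace ℝ E]

def bregmanDiv (f : E → ℝ) (f' : E → E) (x y : E) : ℝ :=
  f x - f y - ⟪f' y, x - y⟫_ℝ

lemma bregmanDiv_sub_half_mul_sq_norm (f : E → ℝ) (f' : E → E) (μ : ℝ) (x y : E) :
    bregmanDiv (fun z => f z - μ / 2 * ‖z‖ ^ 2) (fun z => f' z - μ • z) x y
      = bregmanDiv f f' x y - μ / 2 * ‖x - y‖ ^ 2 := by
  rw [bregmanDiv, bregmanDiv, @norm_sub_sq_real, inner_sub_left, real_inner_smul_left,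
    inner_sub_right y, real_inner_self_eq_norm_sq, real_inner_comm x y]
  ring

/-- Cocoercivity: compare the lower bound at `y` with the upper bound at `x`, evaluated at the
gradient step `z = x - C⁻¹ (f' x - f' y)`. -/
lemma sq_norm_sub_div_le_bregmanDiv {f : E → ℝ} {f' : E → E} {C : ℝ} (hC : 0 < C)
    (hlow : ∀ x y, 0 ≤ bregmanDiv f f' x y)
    (hup : ∀ x y, bregmanDiv f f' x y ≤ C / 2 * ‖x - y‖ ^ 2) (x y : E) :
    ‖f' x - f' y‖ ^ 2 / (2 * C) ≤ bregmanDiv f f' x y := by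
  set w := f' x - f' y
  set z := x - C⁻¹ • w
  have hlow_zy := hlow z y
  have hup_zx := hup z x
  have hzx : z - x = -(C⁻¹ • w) := by simp [z]
  have hzy : z - y = (x - y) - C⁻¹ • w := by simp only [z]; abel
  have hw : ⟪f' x, w⟫_ℝ - ⟪f' y, w⟫_ℝ = ‖w‖ ^ 2 := by
    rw [← inner_sub_left, real_inner_self_eq_norm_sq]
  unfold bregmanDiv at *
  rw [hzy, inner_sub_right, real_inner_smul_right] at hlow_zy
  rw [hzx, norm_neg, norm_smul, Real.norm_of_nonneg (inv_nonneg.mpr hC.le), inner_neg_right,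
    real_inner_smul_right] at hup_zx
  rw [div_le_iff₀ (by positivity)]
  field_simp at hlow_zy hup_zx
  linarith

lemma sq_norm_sub_sub_smul_div_le_bregmanDiv_sub {f : E → ℝ} {f' : E → E} {μ L : ℝ}
    (hμL : μ < L) (hlow : ∀ x y, μ / 2 * ‖x - y‖ ^ 2 ≤ bregmanDiv f f' x y)
    (hup : ∀ x y, bregmanDiv f f' x y ≤ L / 2 * ‖x - y‖ ^ 2) (x y : E) :
    ‖f' x - f' y - μ • (x - y)‖ ^ 2 / (2 * (L - μ))
      ≤ bregmanDiv f f' x y - μ / 2 * ‖x - y‖ ^ 2 := by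
  have h := sq_norm_sub_div_le_bregmanDiv (f := fun z => f z - μ / 2 * ‖z‖ ^ 2)
    (f' := fun z => f' z - μ • z) (sub_pos.mpr hμL)
    (fun x y => by rw [bregmanDiv_sub_half_mul_sq_norm]; linarith [hlow x y])
    (fun x y => by rw [bregmanDiv_sub_half_mul_sq_norm]; linarith [hup x y]) x y
  rwa [bregmanDiv_sub_half_mul_sq_norm, sub_sub_sub_comm, ← smul_sub] at h

variable [CompleteSpace E]

lemma HasGradientAt.sub {f g : E → ℝ} {f' g' x : E} (hf : HasGradientAt f f' x)
    (hg : HasGradientAt g g' x) : HasGradientAt (fun z => f z - g z) (f' - g') x := by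
  rw [hasGradientAt_iff_hasFDerivAt, map_sub]
  exact (hasGradientAt_iff_hasFDerivAt.mp hf).sub (hasGradientAt_iff_hasFDerivAt.mp hg)

lemma hasGradientAt_half_mul_sq_norm (μ : ℝ) (x : E) :
    HasGradientAt (fun z => μ / 2 * ‖z‖ ^ 2) (μ • x) x := by
  rw [hasGradientAt_iff_hasFDerivAt]
  convert ((hasStrictFDerivAt_norm_sq x).hasFDerivAt).const_mul (μ / 2) using 1
  · rfl
  ext v
  simp only [map_smul, smul_apply, InnerProductSpace.toDual_apply_apply,
    smul_eq_mul, coe_innerSL_apply, nsmul_eq_mul, Nat.cast_ofNat]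
  ring

lemma HasGradientAt.hasDerivAt_comp_add_smul {f : E → ℝ} {f' y v : E} {t : ℝ}
    (hf : HasGradientAt f f' (y + t • v)) :
    HasDerivAt (fun s : ℝ => f (y + s • v)) ⟪f', v⟫_ℝ t := by
  have hline : HasDerivAt (fun s : ℝ => y + s • v) v t := by
    simpa using ((hasDerivAt_id t).smul_const v).const_add y
  have h := (hasGradientAt_iff_hasFDerivAt.mp hf).comp_hasDerivAt t hline
  simp only [InnerProductSpace.toDual_apply_apply] at h
  exact h

lemma ConvexOn.bregmanDiv_nonneg {f : E → ℝ} {f' : E → E} {y : E} (hf : ConvexOn ℝ univ f)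
    (hy : HasGradientAt f (f' y) y) (x : E) : 0 ≤ bregmanDiv f f' x y := by
  have hline : ConvexOn ℝ univ (fun s : ℝ => f (y + s • (x - y))) := by
    have h : (fun s : ℝ => f (y + s • (x - y))) = f ∘ AffineMap.lineMap y x := by
      ext s
      simp [AffineMap.lineMap_apply, add_comm]
    simpa [h] using hf.comp_affineMap (AffineMap.lineMap y x)
  have hslope := hline.le_slope_of_hasDerivAt (mem_univ 0) (mem_univ 1) zero_lt_one
    (HasGradientAt.hasDerivAt_comp_add_smul (by simpa using hy))
  simp only [slope_def_field, one_smul, add_sub_cancel, zero_smul, add_zero, sub_zero, div_one]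
    at hslope
  unfold bregmanDiv
  linarith

lemma StrongConvexOn.half_mul_sq_norm_le_bregmanDiv {f : E → ℝ} {f' : E → E} {μ : ℝ} {y : E}
    (hf : StrongConvexOn univ μ f) (hy : HasGradientAt f (f' y) y) (x : E) :
    μ / 2 * ‖x - y‖ ^ 2 ≤ bregmanDiv f f' x y := by
  have h := (strongConvexOn_iff_convex.mp hf).bregmanDiv_nonneg (f' := fun z => f' z - μ • z)
    (hy.sub (hasGradientAt_half_mul_sq_norm μ y)) x
  rw [bregmanDiv_sub_half_mul_sq_norm] at h
  linarith

/-- The descent lemma: `t ↦ f (y + t (x - y)) - t ⟪f' y, x - y⟫ - (K/2) t² ‖x - y‖²` has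
nonpositive derivative for `t ≥ 0`. -/
lemma bregmanDiv_le_of_lipschitzWith {f : E → ℝ} {f' : E → E} {K : NNReal}
    (hf : ∀ z, HasGradientAt f (f' z) z) (hK : LipschitzWith K f') (x y : E) :
    bregmanDiv f f' x y ≤ K / 2 * ‖x - y‖ ^ 2 := by
  set v := x - y
  let ψ : ℝ → ℝ := fun t => f (y + t • v) - t * ⟪f' y, v⟫_ℝ - K / 2 * t ^ 2 * ‖v‖ ^ 2
  have hψ : ∀ t, HasDerivAt ψ (⟪f' (y + t • v), v⟫_ℝ - ⟪f' y, v⟫_ℝ - K * t * ‖v‖ ^ 2) t := by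
    intro t
    have hline : HasDerivAt (fun s : ℝ => f (y + s • v)) ⟪f' (y + t • v), v⟫_ℝ t :=
      (hf _).hasDerivAt_comp_add_smul
    refine ((hline.sub ((hasDerivAt_id t).mul_const ⟪f' y, v⟫_ℝ)).sub
      (((hasDerivAt_pow 2 t).const_mul (K / 2 : ℝ)).mul_const (‖v‖ ^ 2))).congr_deriv (by
      rw [show (2 : ℕ) - 1 = 1 from rfl]
      push_cast
      ring)
  have hψ_nonpos : ∀ t, 0 ≤ t → ⟪f' (y + t • v), v⟫_ℝ - ⟪f' y, v⟫_ℝ - K * t * ‖v‖ ^ 2 ≤ 0 := by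
    intro t ht
    have : ⟪f' (y + t • v) - f' y, v⟫_ℝ ≤ K * t * ‖v‖ ^ 2 :=
      calc ⟪f' (y + t • v) - f' y, v⟫_ℝ ≤ ‖f' (y + t • v) - f' y‖ * ‖v‖ := real_inner_le_norm _ _
        _ ≤ K * ‖t • v‖ * ‖v‖ := by
          gcongr; simpa using hK.norm_sub_le (y + t • v) y
        _ = K * t * ‖v‖ ^ 2 := by rw [norm_smul, Real.norm_of_nonneg ht]; ring
    rw [inner_sub_left] at this
    linarith
  have hanti : AntitoneOn ψ (Ici 0) :=
    antitoneOn_of_hasDerivWithinAt_nonpos (convex_Ici 0)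
      (HasDerivAt.continuousOn fun t _ => hψ t) (fun t _ => (hψ t).hasDerivWithinAt)
      (fun t ht => hψ_nonpos t (by rw [interior_Ici] at ht; exact le_of_lt ht))
  have h01 := hanti (mem_Ici.mpr le_rfl) (mem_Ici.mpr zero_le_one) zero_le_one
  simp only [ψ, zero_smul, one_smul, add_zero, zero_mul, one_mul, sub_zero, one_pow,
    ne_eq, OfNat.ofNat_ne_zero, not_false_eq_true, zero_pow, mul_zero] at h01
  unfold bregmanDiv
  rw [show y + v = x by simp [v]] at h01
  linarith

end Bregman

lemma one_div_one_add_sqrt_div_mul_le {μ L S Y P D : ℝ} (hμ : 0 < μ) (hμL : μ < L)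
    (hP : P ≤ S * Y)
    (h : Y ^ 2 - 2 * μ * P + μ ^ 2 * S ^ 2 ≤ 2 * (L - μ) * (D - μ / 2 * S ^ 2)) :
    1 / (1 + √(L / μ)) * P ≤ D := by
  obtain ⟨a, ha, rfl⟩ : ∃ a, 0 < a ∧ a ^ 2 = μ := ⟨√μ, Real.sqrt_pos.mpr hμ, Real.sq_sqrt hμ.le⟩
  obtain ⟨b, hb, rfl⟩ : ∃ b, 0 < b ∧ b ^ 2 = L :=
    ⟨√L, Real.sqrt_pos.mpr (hμ.trans hμL), Real.sq_sqrt (hμ.trans hμL).le⟩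
  have hab : a < b := by nlinarith
  have hsqrt : √(b ^ 2 / a ^ 2) = b / a := by
    rw [← div_pow, Real.sqrt_sq (div_pos hb ha).le]
  have young : 2 * a * b * P ≤ Y ^ 2 + a ^ 2 * b ^ 2 * S ^ 2 := by
    nlinarith [sq_nonneg (Y - a * b * S), mul_le_mul_of_nonneg_left hP (mul_pos ha hb).le]
  have key : a * P ≤ (a + b) * D := by
    nlinarith [mul_pos (sub_pos.mpr hab) ha]
  rw [hsqrt, show 1 / (1 + b / a) = a / (a + b) by field_simp, div_mul_eq_mul_div,
    div_le_iff₀ (by positivity)]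
  linarith

/-- Under exact line search orthogonality, `f(x_k) - f(x_{k+1}) ≥ s_kᵀ y_k / (1 + √κ)`. -/
theorem function_decrease_exact_line_search {d : ℕ} (f : EuclideanSpace ℝ (Fin d) → ℝ)
    (μ L : ℝ) (hμ : 0 < μ) (hμL : μ < L) (hf : ContDiff ℝ 2 f)
    (hsc : StrongConvexOn Set.univ μ f)
    (hlip : LipschitzWith (Real.toNNReal L) (gradient f))
    (xk xk1 : EuclideanSpace ℝ (Fin d))
    (horth : ⟪gradient f xk1, xk1 - xk⟫_ℝ = 0) :
    f xk - f xk1 ≥ (1 / (1 + Real.sqrt (L / μ))) *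
      ⟪xk1 - xk, gradient f xk1 - gradient f xk⟫_ℝ := by
  have hgrad : ∀ z, HasGradientAt f (gradient f z) z := fun z =>
    ((hf.differentiable (by norm_num)) z).hasGradientAt
  have hup : ∀ x y, bregmanDiv f (gradient f) x y ≤ L / 2 * ‖x - y‖ ^ 2 := by
    simpa [Real.coe_toNNReal L (hμ.trans hμL).le] using bregmanDiv_le_of_lipschitzWith hgrad hlip
  have interp := sq_norm_sub_sub_smul_div_le_bregmanDiv_sub hμL
    (fun x y => hsc.half_mul_sq_norm_le_bregmanDiv (hgrad y) x) hup xk xk1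
  have hdecrease : bregmanDiv f (gradient f) xk xk1 = f xk - f xk1 := by
    rw [bregmanDiv, ← neg_sub xk1 xk, inner_neg_right, horth, neg_zero, sub_zero]
  have hnorm : ‖gradient f xk - gradient f xk1 - μ • (xk - xk1)‖ ^ 2
      = ‖gradient f xk1 - gradient f xk‖ ^ 2
        - 2 * μ * ⟪xk1 - xk, gradient f xk1 - gradient f xk⟫_ℝ + μ ^ 2 * ‖xk1 - xk‖ ^ 2 := by
    rw [← norm_neg, show -(gradient f xk - gradient f xk1 - μ • (xk - xk1))
      = (gradient f xk1 - gradient f xk) - μ • (xk1 - xk) by module, @norm_sub_sq_real,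
      norm_smul, real_inner_smul_right, real_inner_comm, Real.norm_eq_abs, abs_of_pos hμ]
    ring
  rw [hdecrease, hnorm, norm_sub_rev xk xk1, div_le_iff₀ (by linarith)] at interp
  exact one_div_one_add_sqrt_div_mul_le hμ hμL (real_inner_le_norm _ _) (by linarith)
end

section
/- Let f : ℝ^d → ℝ be twice continuously differentiable, μ-strongly convex, with M-Lipschitz Hessian and minimizer x_*. Let x_k, x_{k+1} ∈ ℝ^d with f(x_{k+1}) ≤ f(x_k), define J_k = ∫_0^1 ∇²f(x_k + τ(x_{k+1} - x_k)) dτ and C_k = (M/μ^{3/2})√(2(f(x_k) - f(x_*))). Then ‖∇²f(x_*) - J_k‖ ≤ (M/√μ)√(2(f(x_k) - f(x_*))), and consequently (1/(1 + C_k)) ∇²f(x_*) ⪯ J_k ⪯ (1 + C_k) ∇²f(x_*) in the Loewner order. -/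
/-!
Restricted to the segment from `x_*` to `x`, `f` has slope `0` at `x_*` and second derivative at
least `μ ‖x - x_*‖²`, so `f x - f x_* ≥ μ/2 ‖x - x_*‖²`. Hence `x_k`, `x_{k+1}` and the whole
segment between them lie in the ball of radius `R = √(2 (f x_k - f x_*) / μ)` around `x_*`, and
the Lipschitz bound on the Hessian gives `‖∇²f(x_*) - J_k‖ ≤ M R = C_k μ`. A symmetric matrix of
norm at most `C_k μ` is below `C_k μ I`, which is below `C_k A` whenever `A ⪰ μ I`; applying this
with `A = ∇²f(x_*)` and with `A = J_k`, an average of matrices `⪰ μ I`, gives the two Loewner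
bounds.
-/

open MeasureTheory
open scoped InnerProductSpace Matrix.Norms.L2Operator MatrixOrder

theorem add_half_mul_sq_le_of_le_deriv2 {φ φ' φ'' : ℝ → ℝ} {c t : ℝ}
    (hφ : ∀ s, HasDerivAt φ (φ' s) s) (hφ' : ∀ s, HasDerivAt φ' (φ'' s) s)
    (hc : ∀ s, c ≤ φ'' s) (h0 : φ' 0 = 0) (ht : 0 ≤ t) :
    φ 0 + c / 2 * t ^ 2 ≤ φ t := by
  have hmono : Monotone fun s => φ' s - c * s :=
    monotone_of_hasDerivAt_nonneg (fun s => (hφ' s).sub ((hasDerivAt_id s).const_mul c))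
      fun s => by simpa using hc s
  have hquad : ∀ s, HasDerivAt (fun s => c / 2 * s ^ 2) (c * s) s := fun s =>
    ((hasDerivAt_pow 2 s).const_mul (c / 2)).congr_deriv (by push_cast; ring)
  have hψ : MonotoneOn (fun s => φ s - c / 2 * s ^ 2) (Set.Ici 0) :=
    monotoneOn_of_hasDerivWithinAt_nonneg (convex_Ici 0)
      (fun s _ => ((hφ s).sub (hquad s)).continuousAt.continuousWithinAt)
      (fun s _ => ((hφ s).sub (hquad s)).hasDerivWithinAt)
      fun s hs => by simpa [h0] using hmono (interior_subset hs : (0 : ℝ) ≤ s)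
  have := hψ Set.self_mem_Ici ht ht
  simp only at this
  linarith

theorem norm_sub_intervalIntegral_le {E : Type*} [NormedAddCommGroup E] [NormedSpace ℝ E]
    [CompleteSpace E] {F : ℝ → E} {c : E} {D : ℝ} (hF : IntervalIntegrable F volume 0 1)
    (h : ∀ τ ∈ Set.Icc (0 : ℝ) 1, ‖c - F τ‖ ≤ D) :
    ‖c - ∫ τ in (0 : ℝ)..1, F τ‖ ≤ D := by
  have hsub : c - ∫ τ in (0 : ℝ)..1, F τ = ∫ τ in (0 : ℝ)..1, (c - F τ) := by
    simp [intervalIntegral.integral_sub intervalIntegrable_const hF]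
  rw [hsub]
  simpa using intervalIntegral.norm_integral_le_of_norm_le_const fun τ hτ =>
    h τ (Set.Ioc_subset_Icc_self (Set.uIoc_of_le (zero_le_one' ℝ) ▸ hτ))

theorem le_intervalIntegral_of_forall_le {E : Type*} [NormedAddCommGroup E] [NormedSpace ℝ E]
    [CompleteSpace E] [PartialOrder E] [IsOrderedAddMonoid E] [IsOrderedModule ℝ E]
    [ClosedIciTopology E] {F : ℝ → E} {c : E}
    (hF : IntervalIntegrable F volume 0 1) (h : ∀ τ ∈ Set.Icc (0 : ℝ) 1, c ≤ F τ) :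
    c ≤ ∫ τ in (0 : ℝ)..1, F τ := by
  rw [intervalIntegral.integral_of_le zero_le_one]
  simpa using setIntegral_ge_of_const_le measurableSet_Ioc measure_Ioc_lt_top.ne
    (fun τ hτ => h τ (Set.Ioc_subset_Icc_self hτ)) hF.1

namespace Matrix

theorem isHermitian_of_smul_one_le {n : Type*} [DecidableEq n] {A : Matrix n n ℝ} {μ : ℝ}
    (h : μ • 1 ≤ A) : A.IsHermitian := by
  simpa using (Matrix.le_iff.mp h).isHermitian.add (isHermitian_one.smul (IsSelfAdjoint.all μ))

variable {n : Type*} [Fintype n]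

theorem isClosed_setOf_posSemidef : IsClosed {A : Matrix n n ℝ | A.PosSemidef} := by
  simp only [posSemidef_iff_dotProduct_mulVec, Set.ofPred_and, Set.ofPred_forall]
  exact (isClosed_eq continuous_id.matrix_conjTranspose continuous_id).inter
    (isClosed_iInter fun x => isClosed_le continuous_const
      (continuous_const.dotProduct (continuous_id.matrix_mulVec continuous_const)))

instance : ClosedIciTopology (Matrix n n ℝ) where
  isClosed_Ici A := by
    simp only [Set.Ici, Matrix.le_iff]
    exact isClosed_setOf_posSemidef.preimage (continuous_id.sub continuous_const)

variable [DecidableEq n]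

theorem posSemidef_iff_inner_toEuclideanCLM {A : Matrix n n ℝ} :
    A.PosSemidef ↔ A.IsHermitian ∧ ∀ v, 0 ≤ ⟪toEuclideanCLM (𝕜 := ℝ) A v, v⟫_ℝ := by
  rw [posSemidef_iff_dotProduct_mulVec]
  refine and_congr_right fun _ => (EuclideanSpace.equiv n ℝ).symm.forall_congr fun x => ?_
  rw [real_inner_comm, inner_toEuclideanCLM]
  rfl

theorem mul_norm_sq_le_inner_of_smul_one_le {A : Matrix n n ℝ} {μ : ℝ} (h : μ • 1 ≤ A)
    (v : EuclideanSpace ℝ n) : μ * ‖v‖ ^ 2 ≤ ⟪toEuclideanCLM (𝕜 := ℝ) A v, v⟫_ℝ := by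
  have := (posSemidef_iff_inner_toEuclideanCLM.mp (Matrix.le_iff.mp h)).2 v
  simpa [map_sub, inner_sub_left, real_inner_smul_left, real_inner_self_eq_norm_sq] using this

theorem le_smul_one_of_norm_le {A : Matrix n n ℝ} {r : ℝ} (hA : A.IsHermitian) (h : ‖A‖ ≤ r) :
    A ≤ r • 1 := by
  refine Matrix.le_iff.mpr (posSemidef_iff_inner_toEuclideanCLM.mpr
    ⟨(isHermitian_one.smul (IsSelfAdjoint.all r)).sub hA, fun v => ?_⟩)
  have : ⟪toEuclideanCLM (𝕜 := ℝ) A v, v⟫_ℝ ≤ r * ‖v‖ ^ 2 :=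
    calc _ ≤ ‖toEuclideanCLM (𝕜 := ℝ) A v‖ * ‖v‖ := real_inner_le_norm _ _
      _ ≤ ‖A‖ * ‖v‖ * ‖v‖ := by gcongr; exact (toEuclideanCLM (𝕜 := ℝ) A).le_opNorm v
      _ ≤ r * ‖v‖ ^ 2 := by rw [sq, ← mul_assoc]; gcongr
  simpa [map_sub, inner_sub_left, real_inner_smul_left, real_inner_self_eq_norm_sq] using this

theorem le_one_add_smul_of_norm_sub_le {A B : Matrix n n ℝ} {μ c : ℝ} (hA : μ • 1 ≤ A)
    (hB : B.IsHermitian) (hc : 0 ≤ c) (h : ‖A - B‖ ≤ c * μ) : B ≤ (1 + c) • A :=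
  calc B = A + (B - A) := (add_sub_cancel A B).symm
    _ ≤ A + (c * μ) • 1 := by
      gcongr
      exact le_smul_one_of_norm_le (hB.sub (isHermitian_of_smul_one_le hA))
        (norm_sub_rev B A ▸ h)
    _ = A + c • (μ • 1) := by rw [smul_smul]
    _ ≤ A + c • A := by gcongr
    _ = (1 + c) • A := by rw [add_smul, one_smul]

theorem inv_one_add_smul_le_of_norm_sub_le {A B : Matrix n n ℝ} {μ c : ℝ} (hA : A.IsHermitian)
    (hB : μ • 1 ≤ B) (hc : 0 ≤ c) (h : ‖A - B‖ ≤ c * μ) : (1 + c)⁻¹ • A ≤ B := by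
  have := le_one_add_smul_of_norm_sub_le hB hA hc (norm_sub_rev A B ▸ h)
  calc (1 + c)⁻¹ • A ≤ (1 + c)⁻¹ • (1 + c) • B := by gcongr
    _ = B := inv_smul_smul₀ (by positivity) B

end Matrix

open Matrix in
theorem add_half_mul_norm_sub_sq_le_of_smul_one_le_hessian {n : Type*} [Fintype n]
    [DecidableEq n] {f : EuclideanSpace ℝ n → ℝ} {H : EuclideanSpace ℝ n → Matrix n n ℝ} {μ : ℝ}
    (hf : Differentiable ℝ f)
    (hH : ∀ x, HasFDerivAt (gradient f) (toEuclideanCLM (𝕜 := ℝ) (H x)) x)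
    (hHμ : ∀ x, μ • 1 ≤ H x) {x₀ : EuclideanSpace ℝ n} (hx₀ : gradient f x₀ = 0)
    (x : EuclideanSpace ℝ n) : f x₀ + μ / 2 * ‖x - x₀‖ ^ 2 ≤ f x := by
  set v := x - x₀
  have hline : ∀ t : ℝ, HasDerivAt (fun s : ℝ => x₀ + s • v) v t := fun t => by
    simpa using ((hasDerivAt_id t).smul_const v).const_add x₀
  have hφ : ∀ t : ℝ, HasDerivAt (fun s => f (x₀ + s • v)) ⟪gradient f (x₀ + t • v), v⟫_ℝ t :=
    fun t => by
      simpa [Function.comp_def] using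
        (hf _).hasGradientAt.hasFDerivAt.comp_hasDerivAt t (hline t)
  have hφ' : ∀ t : ℝ, HasDerivAt (fun s => ⟪gradient f (x₀ + s • v), v⟫_ℝ)
      ⟪toEuclideanCLM (𝕜 := ℝ) (H (x₀ + t • v)) v, v⟫_ℝ t := fun t => by
    simpa using ((hH _).comp_hasDerivAt t (hline t)).inner ℝ (hasDerivAt_const t v)
  have := add_half_mul_sq_le_of_le_deriv2 hφ hφ'
    (fun t => mul_norm_sq_le_inner_of_smul_one_le (hHμ _) v) (by simp [hx₀]) zero_le_one
  simpa [v, mul_div_right_comm] using this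

open Matrix in
theorem dist_le_sqrt_of_smul_one_le_hessian {n : Type*} [Fintype n] [DecidableEq n]
    {f : EuclideanSpace ℝ n → ℝ} {H : EuclideanSpace ℝ n → Matrix n n ℝ} {μ : ℝ} (hμ : 0 < μ)
    (hf : Differentiable ℝ f)
    (hH : ∀ x, HasFDerivAt (gradient f) (toEuclideanCLM (𝕜 := ℝ) (H x)) x)
    (hHμ : ∀ x, μ • 1 ≤ H x) {x₀ : EuclideanSpace ℝ n} (hx₀ : gradient f x₀ = 0)
    {y : EuclideanSpace ℝ n} {a : ℝ} (hy : f y ≤ a) :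
    dist y x₀ ≤ Real.sqrt (2 * (a - f x₀) / μ) := by
  have := add_half_mul_norm_sub_sq_le_of_smul_one_le_hessian hf hH hHμ hx₀ y
  rw [dist_eq_norm]
  refine Real.le_sqrt_of_sq_le ((le_div_iff₀ hμ).mpr ?_)
  linarith

theorem averaged_hessian_close_to_hessian_at_opt_general {d : ℕ}
    (f : EuclideanSpace ℝ (Fin d) → ℝ) (μ M : ℝ) (hμ : 0 < μ) (hM : 0 < M)
    (Hess : EuclideanSpace ℝ (Fin d) → Matrix (Fin d) (Fin d) ℝ)
    (hf : ContDiff ℝ 2 f)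
    (hHess : ∀ x, HasFDerivAt (gradient f) (Matrix.toEuclideanCLM (𝕜 := ℝ) (Hess x)) x)
    (hstr : ∀ x, (Hess x - μ • (1 : Matrix (Fin d) (Fin d) ℝ)).PosSemidef)
    (hlipH : ∀ x y, ‖Hess x - Hess y‖ ≤ M * ‖x - y‖)
    (xs : EuclideanSpace ℝ (Fin d)) (hmin : ∀ y, f xs ≤ f y)
    (xk xk1 : EuclideanSpace ℝ (Fin d)) (hdec : f xk1 ≤ f xk)
    (J : Matrix (Fin d) (Fin d) ℝ)
    (hJ : J = ∫ τ in (0:ℝ)..1, Hess (xk + τ • (xk1 - xk)))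
    (C : ℝ) (hC : C = (M / μ ^ ((3:ℝ)/2)) * Real.sqrt (2 * (f xk - f xs))) :
    ‖Hess xs - J‖ ≤ (M / Real.sqrt μ) * Real.sqrt (2 * (f xk - f xs)) ∧
    (J - (1 / (1 + C)) • Hess xs).PosSemidef ∧
    ((1 + C) • Hess xs - J).PosSemidef := by
  have hHμ : ∀ x, μ • 1 ≤ Hess x := fun x => Matrix.le_iff.mpr (hstr x)
  have hxs : gradient f xs = 0 := by
    simp [gradient, IsLocalMin.fderiv_eq_zero (Filter.Eventually.of_forall hmin)]
  set R := Real.sqrt (2 * (f xk - f xs) / μ) with hR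
  have hball : ∀ y, f y ≤ f xk → y ∈ Metric.closedBall xs R := fun y hy =>
    dist_le_sqrt_of_smul_one_le_hessian hμ (hf.differentiable (by norm_num)) hHess hHμ hxs hy
  have hint : IntervalIntegrable (fun τ : ℝ => Hess (xk + τ • (xk1 - xk))) volume 0 1 :=
    ((LipschitzWith.of_dist_le' (by simpa [dist_eq_norm] using hlipH)).continuous.comp
      (by fun_prop)).intervalIntegrable 0 1
  have hnorm : ‖Hess xs - J‖ ≤ M * R := hJ ▸ norm_sub_intervalIntegral_le hint fun τ hτ =>
    (hlipH _ _).trans <| by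
      gcongr
      rw [← dist_eq_norm, dist_comm]
      exact (convex_closedBall xs R).add_smul_sub_mem (hball xk le_rfl) (hball xk1 hdec) hτ
  have hJμ : μ • 1 ≤ J := hJ ▸ le_intervalIntegral_of_forall_le hint fun τ _ => hHμ _
  have hMR : M * R = M / Real.sqrt μ * Real.sqrt (2 * (f xk - f xs)) := by
    rw [hR, Real.sqrt_div' _ hμ.le]
    ring
  have hCμ : C * μ = M / Real.sqrt μ * Real.sqrt (2 * (f xk - f xs)) := by
    rw [hC, show (3 : ℝ) / 2 = 1 + 1 / 2 by norm_num, Real.rpow_add hμ, Real.rpow_one,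
      ← Real.sqrt_eq_rpow]
    field_simp
  have hC0 : 0 ≤ C := hC ▸ by positivity
  rw [hMR, ← hCμ] at hnorm
  refine ⟨hCμ ▸ hnorm, Matrix.le_iff.mp ?_, Matrix.le_iff.mp ?_⟩
  · rw [one_div]
    exact Matrix.inv_one_add_smul_le_of_norm_sub_le
      (Matrix.isHermitian_of_smul_one_le (hHμ xs)) hJμ hC0 hnorm
  · exact Matrix.le_one_add_smul_of_norm_sub_le (hHμ xs)
      (Matrix.isHermitian_of_smul_one_le hJμ) hC0 hnorm

/-- Bound on the deviation of the averaged Hessian `J_k` from `∇²f(x_*)`, and the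
resulting Loewner sandwich `(1/(1+C_k)) ∇²f(x_*) ⪯ J_k ⪯ (1+C_k) ∇²f(x_*)`. -/
theorem averaged_hessian_close_to_hessian_at_opt {d : ℕ}
    (f : EuclideanSpace ℝ (Fin d) → ℝ) (μ M : ℝ) (hμ : 0 < μ) (hM : 0 < M)
    (Hess : EuclideanSpace ℝ (Fin d) → Matrix (Fin d) (Fin d) ℝ)
    (hf : ContDiff ℝ 2 f)
    (hHess : ∀ x, HasFDerivAt (gradient f) (Matrix.toEuclideanCLM (𝕜 := ℝ) (Hess x)) x)
    (hsymm : ∀ x, (Hess x).IsHermitian)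
    (hstr : ∀ x, (Hess x - μ • (1 : Matrix (Fin d) (Fin d) ℝ)).PosSemidef)
    (hlipH : ∀ x y, ‖Hess x - Hess y‖ ≤ M * ‖x - y‖)
    (xs : EuclideanSpace ℝ (Fin d)) (hmin : ∀ y, f xs ≤ f y)
    (xk xk1 : EuclideanSpace ℝ (Fin d)) (hdec : f xk1 ≤ f xk)
    (J : Matrix (Fin d) (Fin d) ℝ)
    (hJ : J = ∫ τ in (0:ℝ)..1, Hess (xk + τ • (xk1 - xk)))
    (C : ℝ) (hC : C = (M / μ ^ ((3:ℝ)/2)) * Real.sqrt (2 * (f xk - f xs))) :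
    ‖Hess xs - J‖ ≤ (M / Real.sqrt μ) * Real.sqrt (2 * (f xk - f xs)) ∧
    (J - (1 / (1 + C)) • Hess xs).PosSemidef ∧
    ((1 + C) • Hess xs - J).PosSemidef :=
  averaged_hessian_close_to_hessian_at_opt_general f μ M hμ hM Hess hf hHess hstr hlipH xs hmin xk
    xk1 hdec J hJ C hC
end

section
/- Let B ∈ ℝ^{d×d} be symmetric positive definite, s, y ∈ ℝ^d with sᵀ y > 0 and s ≠ 0, and let B₊ = B - (B s sᵀ B)/(sᵀ B s) + (y yᵀ)/(sᵀ y) be the BFGS update. Define Ψ(A) = Tr(A) - log Det(A) - d, m = (sᵀ y)/‖s‖², and cos θ = (sᵀ B s)/(‖B s‖ ‖s‖). Then Ψ(B₊) ≤ Ψ(B) + ‖y‖²/(sᵀ y) - 1 + log(cos² θ / m). -/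
/-!
Writing `B₊ = B + U V` with `U = [Bs | y]` and `V = [-(sᵀB)/(sᵀBs) ; yᵀ/(sᵀy)]`, the matrix
determinant lemma reduces `det B₊` to a `2 × 2` determinant, giving
`det B₊ = det B · (sᵀy)/(sᵀBs)`, while `Tr B₊ = Tr B - ‖Bs‖²/(sᵀBs) + ‖y‖²/(sᵀy)`.
Since `cos²θ / m = (sᵀBs)² / (‖Bs‖² sᵀy)`, the claim becomes `log x ≤ x - 1`
for `x = ‖Bs‖²/(sᵀBs)`.
-/

open Matrix

namespace Matrix

theorem dotProduct_self_pos {n R : Type*} [Fintype n] [Ring R] [LinearOrder R]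
    [IsStrictOrderedRing R] {v : n → R} (hv : v ≠ 0) : 0 < v ⬝ᵥ v :=
  lt_of_le_of_ne (Finset.sum_nonneg fun i _ => mul_self_nonneg (v i))
    (Ne.symm (dotProduct_self_eq_zero.not.mpr hv))

variable {K n : Type*} [Field K] [Fintype n]

def bfgsUpdate (B : Matrix n n K) (s y : n → K) : Matrix n n K :=
  B - (1 / (s ⬝ᵥ B *ᵥ s)) • vecMulVec (B *ᵥ s) (s ᵥ* B) + (1 / (s ⬝ᵥ y)) • vecMulVec y y

theorem trace_bfgsUpdate (B : Matrix n n K) (s y : n → K) :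
    (bfgsUpdate B s y).trace =
      B.trace - (B *ᵥ s ⬝ᵥ s ᵥ* B) / (s ⬝ᵥ B *ᵥ s) + (y ⬝ᵥ y) / (s ⬝ᵥ y) := by
  simp only [bfgsUpdate, trace_add, trace_sub, trace_smul, trace_vecMulVec, smul_eq_mul]
  ring

theorem det_bfgsUpdate [DecidableEq n] (B : Matrix n n K) (hB : IsUnit B.det) (s y : n → K)
    (hs : s ⬝ᵥ B *ᵥ s ≠ 0) :
    (bfgsUpdate B s y).det = B.det * ((s ⬝ᵥ y) / (s ⬝ᵥ B *ᵥ s)) := by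
  set p := s ⬝ᵥ B *ᵥ s
  set q := s ⬝ᵥ y
  let U : Matrix n (Fin 2) K := (of ![B *ᵥ s, y])ᵀ
  let V : Matrix (Fin 2) n K := of ![-(1 / p) • (s ᵥ* B), (1 / q) • y]
  have hUV : bfgsUpdate B s y = B + U * V := by
    ext i j
    simp [bfgsUpdate, U, V, mul_apply, Fin.sum_univ_two, vecMulVec_apply]
    ring
  have hentry : ∀ k l, (V * B⁻¹ * U) k l = V k ᵥ* B⁻¹ ⬝ᵥ ![B *ᵥ s, y] l := fun _ _ => rfl
  have hV₀ : V 0 ᵥ* B⁻¹ = -(1 / p) • s := by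
    rw [show V 0 = -(1 / p) • (s ᵥ* B) from rfl, smul_vecMul, vecMul_vecMul,
      mul_nonsing_inv B hB, vecMul_one]
  have hV₁ : V 1 ᵥ* B⁻¹ = (1 / q) • (y ᵥ* B⁻¹) := by
    rw [show V 1 = (1 / q) • y from rfl, smul_vecMul]
  have hBs : B⁻¹ *ᵥ (B *ᵥ s) = s := by rw [mulVec_mulVec, nonsing_inv_mul B hB, one_mulVec]
  rw [hUV, det_add_mul U V hB, det_fin_two]
  simp only [add_apply, one_apply_eq, one_apply_ne zero_ne_one, one_apply_ne one_ne_zero, hentry,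
    hV₀, hV₁, cons_val_zero, cons_val_one, smul_dotProduct, ← dotProduct_mulVec, hBs,
    smul_eq_mul, dotProduct_comm y s]
  have hp : 1 / p * p = 1 := one_div_mul_cancel hs
  have hq : q * q⁻¹ * q = q := mul_inv_mul_cancel q
  linear_combination (-B.det * (1 + 1 / q * y ⬝ᵥ B⁻¹ *ᵥ y)) * hp + B.det / p * hq

end Matrix

/-- One-step decrease of the potential `Ψ` along the BFGS update:
`Ψ(B₊) ≤ Ψ(B) + ‖y‖²/(sᵀy) - 1 + log(cos²θ/m)`. -/
theorem bfgs_potential_decrease {d : ℕ} (B : Matrix (Fin d) (Fin d) ℝ) (hB : B.PosDef)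
    (s y : Fin d → ℝ) (hsy : 0 < s ⬝ᵥ y) (hs : s ≠ 0)
    (Bplus : Matrix (Fin d) (Fin d) ℝ)
    (hBplus : Bplus = B - (1 / (s ⬝ᵥ B.mulVec s)) • vecMulVec (B.mulVec s) (B.vecMul s)
        + (1 / (s ⬝ᵥ y)) • vecMulVec y y)
    (m cosθ : ℝ) (hm : m = (s ⬝ᵥ y) / (s ⬝ᵥ s))
    (hcos : cosθ = (s ⬝ᵥ B.mulVec s) /
      (Real.sqrt (B.mulVec s ⬝ᵥ B.mulVec s) * Real.sqrt (s ⬝ᵥ s))) :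
    Bplus.trace - Real.log Bplus.det - d ≤
      (B.trace - Real.log B.det - d) + (y ⬝ᵥ y) / (s ⬝ᵥ y) - 1
        + Real.log (cosθ ^ 2 / m) := by
  have hsB : s ᵥ* B = B *ᵥ s := by rw [← mulVec_transpose, show Bᵀ = B from hB.1]
  have hp : 0 < s ⬝ᵥ B *ᵥ s := hB.dotProduct_mulVec_pos hs
  have hBs : 0 < B *ᵥ s ⬝ᵥ B *ᵥ s := dotProduct_self_pos fun h => by simp [h] at hp
  have hss : 0 < s ⬝ᵥ s := dotProduct_self_pos hs
  have hcos_sq : cosθ ^ 2 / m = (s ⬝ᵥ B *ᵥ s) ^ 2 / ((B *ᵥ s ⬝ᵥ B *ᵥ s) * (s ⬝ᵥ y)) := by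
    rw [hcos, hm, div_pow, mul_pow, Real.sq_sqrt hBs.le, Real.sq_sqrt hss.le]
    field_simp
  have hlog := Real.log_le_sub_one_of_pos (div_pos hBs hp)
  rw [Real.log_div hBs.ne' hp.ne'] at hlog
  rw [hBplus, ← bfgsUpdate, trace_bfgsUpdate, det_bfgsUpdate B hB.det_pos.ne'.isUnit s y hp.ne',
    hsB, hcos_sq, Real.log_mul hB.det_pos.ne' (div_pos hsy hp).ne', Real.log_div hsy.ne' hp.ne',
    Real.log_div (by positivity) (by positivity), Real.log_mul hBs.ne' hsy.ne', Real.log_pow]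
  push_cast
  linarith
end

section
/- Let f : ℝ^d → ℝ be twice continuously differentiable and μ-strongly convex with minimizer x_* and M-Lipschitz Hessian. Let C = (M/μ^{3/2})√(2(f(x) - f(x_*))) and G = ∫_0^1 ∇²f(x + τ(x_* - x)) dτ for a point x ∈ ℝ^d. Then ∇f(x) = G (x - x_*), and there exists τ̃ ∈ [0,1] such that f(x) - f(x_*) = (1/2) ∇f(x)ᵀ G^{-1} ∇²f(x + τ̃(x_* - x)) G^{-1} ∇f(x) ≤ ((1+C)²/2) ∇f(x)ᵀ (∇²f(x_*))^{-1} ∇f(x). -/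
/-!
`∇f(x) = G (x - x_*)` is the fundamental theorem of calculus for `∇f` along the segment from `x`
to `x_*`, and since `∇f(x_*) = 0`, a second-order mean value theorem on the same segment gives
`f(x) - f(x_*) = ½ ⟪u, ∇²f(z) u⟫` with `u = x - x_* = G⁻¹ ∇f(x)`. By strong convexity
`μ ‖u‖² ≤ 2 (f(x) - f(x_*))`, so along the segment the Hessian moves by at most `M ‖u‖ ≤ C μ`,
and then `∇²f ⪰ μ` gives `∇²f(z) ⪯ (1 + C) ∇²f(z')` for any two points of the segment; averaging
over `z'` yields `∇²f(z) ⪯ (1 + C) G` and `∇²f(x_*) ⪯ (1 + C) G`. The latter inverts to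
`⟪u, G u⟫ ≤ (1 + C) ⟪∇f(x), ∇²f(x_*)⁻¹ ∇f(x)⟫` by expanding `0 ≤ ⟪r, ∇²f(x_*) r⟫` for
`r = u - (1 + C) ∇²f(x_*)⁻¹ ∇f(x)`.
-/

open scoped InnerProductSpace Matrix.Norms.L2Operator
open Set

theorem mul_le_div_rpow_mul_sqrt_mul {μ M r s : ℝ} (hμ : 0 < μ) (hM : 0 ≤ M) (hr : 0 ≤ r)
    (h : μ / 2 * r ^ 2 ≤ s) : M * r ≤ M / μ ^ ((3 : ℝ) / 2) * √(2 * s) * μ := by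
  have hpow : μ ^ ((3 : ℝ) / 2) = μ * √μ := by
    rw [show (3 : ℝ) / 2 = 1 + 1 / 2 by norm_num, Real.rpow_add hμ, Real.rpow_one,
      ← Real.sqrt_eq_rpow]
  have hsqrt : √μ * r ≤ √(2 * s) := by
    rw [← Real.sqrt_sq hr, ← Real.sqrt_mul hμ.le]
    exact Real.sqrt_le_sqrt (by linarith)
  have hμ' : 0 < √μ := Real.sqrt_pos.mpr hμ
  calc M * r = M / (μ * √μ) * (√μ * r) * μ := by field_simp
    _ ≤ M / (μ * √μ) * √(2 * s) * μ := by gcongr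
    _ = M / μ ^ ((3 : ℝ) / 2) * √(2 * s) * μ := by rw [hpow]

/-- Cauchy's mean value theorem against `t ↦ t ^ 2`, then Lagrange's for `φ'` on `[0, c]`. -/
theorem exists_sub_eq_half_deriv2_of_deriv_zero {φ φ' φ'' : ℝ → ℝ}
    (hφ : ∀ t, HasDerivAt φ (φ' t) t) (hφ' : ∀ t, HasDerivAt φ' (φ'' t) t) (h0 : φ' 0 = 0) :
    ∃ ξ ∈ Ioo (0 : ℝ) 1, φ 1 - φ 0 = φ'' ξ / 2 := by
  have hsq : ∀ t : ℝ, HasDerivAt (fun s => s ^ 2) (2 * t) t := fun t => by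
    simpa using hasDerivAt_pow 2 t
  obtain ⟨c, hc, hcφ⟩ := exists_ratio_hasDerivAt_eq_ratio_slope φ φ' zero_lt_one
    (fun t _ => (hφ t).continuousAt.continuousWithinAt) (fun t _ => hφ t)
    (fun s => s ^ 2) (fun t => 2 * t) (continuous_pow 2).continuousOn (fun t _ => hsq t)
  obtain ⟨ξ, hξ, hξφ⟩ := exists_hasDerivAt_eq_slope φ' φ'' hc.1
    (fun t _ => (hφ' t).continuousAt.continuousWithinAt) (fun t _ => hφ' t)
  refine ⟨ξ, ⟨hξ.1, hξ.2.trans hc.2⟩, ?_⟩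
  have hc0 : c ≠ 0 := hc.1.ne'
  rw [hξφ, h0]
  field_simp
  simp only [one_pow, zero_pow two_ne_zero, sub_zero, one_mul] at hcφ
  linarith

section Segment

variable {E F : Type*} [NormedAddCommGroup E] [NormedSpace ℝ E]
  [NormedAddCommGroup F] [NormedSpace ℝ F]

noncomputable def segmentAverage (g : E → F) (x y : E) : F :=
  ∫ τ in (0 : ℝ)..1, g (x + τ • (y - x))

theorem hasDerivAt_segment (x y : E) (t : ℝ) :
    HasDerivAt (fun τ : ℝ => x + τ • (y - x)) (y - x) t := by
  simpa using ((hasDerivAt_id t).smul_const (y - x)).const_add x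

theorem sub_eq_segmentAverage_fderiv_apply [CompleteSpace F] {g : E → F} {g' : E → E →L[ℝ] F}
    (hg : ∀ z, HasFDerivAt g (g' z) z) (hg' : Continuous g') (x y : E) :
    g y - g x = segmentAverage g' x y (y - x) := by
  have hcont : Continuous fun τ : ℝ => g' (x + τ • (y - x)) := hg'.comp (by fun_prop)
  rw [segmentAverage, ContinuousLinearMap.intervalIntegral_apply (hcont.intervalIntegrable 0 1),
    intervalIntegral.integral_eq_sub_of_hasDerivAt
      (fun t _ => (hg _).comp_hasDerivAt t (hasDerivAt_segment x y t))
      ((hcont.clm_apply continuous_const).intervalIntegrable 0 1)]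
  simp

end Segment

section Gradient

variable {E : Type*} [NormedAddCommGroup E] [InnerProductSpace ℝ E] [CompleteSpace E]
  {f : E → ℝ} {a : E}

theorem IsLocalMin.gradient_eq_zero (h : IsLocalMin f a) : gradient f a = 0 := by
  rw [gradient, h.fderiv_eq_zero, map_zero]

theorem gradient_eq_segmentAverage_apply_of_gradient_eq_zero {H : E → E →L[ℝ] E}
    (hH : ∀ z, HasFDerivAt (gradient f) (H z) z) (hHc : Continuous H) (ha : gradient f a = 0)
    (x : E) : gradient f x = segmentAverage H x a (x - a) := by
  rw [← neg_sub a x, map_neg, ← sub_eq_segmentAverage_fderiv_apply hH hHc, ha, zero_sub, neg_neg]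

theorem exists_sub_eq_half_inner_of_gradient_eq_zero {H : E → E →L[ℝ] E}
    (hf : Differentiable ℝ f) (hH : ∀ z, HasFDerivAt (gradient f) (H z) z)
    (ha : gradient f a = 0) (x : E) :
    ∃ τ ∈ Icc (0 : ℝ) 1, f x - f a = ⟪x - a, H (x + τ • (a - x)) (x - a)⟫_ℝ / 2 := by
  have hφ : ∀ t : ℝ, HasDerivAt (fun s => f (a + s • (x - a)))
      ⟪x - a, gradient f (a + t • (x - a))⟫_ℝ t := fun t => by
    have h := (hf _).hasGradientAt.hasFDerivAt.comp_hasDerivAt t (hasDerivAt_segment a x t)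
    rwa [InnerProductSpace.toDual_apply_apply, real_inner_comm] at h
  have hφ' : ∀ t : ℝ, HasDerivAt (fun s => ⟪x - a, gradient f (a + s • (x - a))⟫_ℝ)
      ⟪x - a, H (a + t • (x - a)) (x - a)⟫_ℝ t := fun t =>
    (innerSL ℝ (x - a)).hasFDerivAt.comp_hasDerivAt t
      ((hH _).comp_hasDerivAt t (hasDerivAt_segment a x t))
  obtain ⟨ξ, hξ, hgap⟩ := exists_sub_eq_half_deriv2_of_deriv_zero hφ hφ' (by simp [ha])
  refine ⟨1 - ξ, ⟨by linarith [hξ.2], by linarith [hξ.1]⟩, ?_⟩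
  rw [show x + (1 - ξ) • (a - x) = a + ξ • (x - a) by module, ← hgap]
  simp

end Gradient

section QuadraticForm

variable {E : Type*} [NormedAddCommGroup E] [InnerProductSpace ℝ E]

theorem ContinuousLinearMap.inner_apply_self_le (A : E →L[ℝ] E) (v : E) :
    ⟪v, A v⟫_ℝ ≤ ‖A‖ * ‖v‖ ^ 2 :=
  calc ⟪v, A v⟫_ℝ ≤ ‖v‖ * ‖A v‖ := real_inner_le_norm _ _
    _ ≤ ‖v‖ * (‖A‖ * ‖v‖) := by gcongr; exact A.le_opNorm v
    _ = ‖A‖ * ‖v‖ ^ 2 := by ring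

theorem inner_apply_le_one_add_mul_of_norm_sub_le {A B : E →L[ℝ] E} {μ c : ℝ} (hc : 0 ≤ c)
    (hB : ∀ v, μ * ‖v‖ ^ 2 ≤ ⟪v, B v⟫_ℝ) (hAB : ‖A - B‖ ≤ c * μ) (v : E) :
    ⟪v, A v⟫_ℝ ≤ (1 + c) * ⟪v, B v⟫_ℝ := by
  have hdiff : ⟪v, A v⟫_ℝ - ⟪v, B v⟫_ℝ ≤ c * (μ * ‖v‖ ^ 2) :=
    calc ⟪v, A v⟫_ℝ - ⟪v, B v⟫_ℝ = ⟪v, (A - B) v⟫_ℝ := by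
          rw [sub_apply, inner_sub_right]
      _ ≤ ‖A - B‖ * ‖v‖ ^ 2 := (A - B).inner_apply_self_le v
      _ ≤ c * μ * ‖v‖ ^ 2 := by gcongr
      _ = c * (μ * ‖v‖ ^ 2) := by ring
  nlinarith [mul_le_mul_of_nonneg_left (hB v) hc]

theorem ContinuousLinearMap.IsPositive.inner_apply_le_mul_of_inner_apply_self_le
    {A : E →L[ℝ] E} (hA : A.IsPositive) {u w : E} {c : ℝ} (hc : 0 < c)
    (h : ⟪u, A u⟫_ℝ ≤ c * ⟪u, A w⟫_ℝ) : ⟪u, A w⟫_ℝ ≤ c * ⟪w, A w⟫_ℝ := by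
  have hsymm : ⟪w, A u⟫_ℝ = ⟪u, A w⟫_ℝ := by
    rw [real_inner_comm]; exact hA.inner_left_eq_inner_right u w
  have hnonneg := hA.inner_nonneg_right (u - c • w)
  simp only [map_sub, map_smul, inner_sub_left, inner_sub_right, real_inner_smul_left,
    real_inner_smul_right, hsymm] at hnonneg
  nlinarith

theorem ContinuousLinearMap.IsPositive.inner_apply_self_le_sq_mul {A B : E →L[ℝ] E}
    (hB : B.IsPositive) {u w g : E} {c : ℝ} (hc : 0 < c) (hA : ⟪u, A u⟫_ℝ ≤ c * ⟪u, g⟫_ℝ)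
    (hBg : ⟪u, B u⟫_ℝ ≤ c * ⟪u, g⟫_ℝ) (hw : B w = g) :
    ⟪u, A u⟫_ℝ ≤ c ^ 2 * ⟪g, w⟫_ℝ := by
  rw [← hw] at hA hBg ⊢
  have := hB.inner_apply_le_mul_of_inner_apply_self_le hc hBg
  rw [real_inner_comm w (B w)]
  nlinarith

end QuadraticForm

section SegmentAverage

variable {E : Type*} [NormedAddCommGroup E] [InnerProductSpace ℝ E] [CompleteSpace E]
  {H : E → E →L[ℝ] E} {x y : E}

theorem inner_segmentAverage_apply (hH : Continuous H) (v w : E) :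
    ⟪v, segmentAverage H x y w⟫_ℝ = ∫ τ in (0 : ℝ)..1, ⟪v, H (x + τ • (y - x)) w⟫_ℝ :=
  (((innerSL ℝ v).comp (ContinuousLinearMap.apply ℝ E w)).intervalIntegral_comp_comm
    ((hH.comp (by fun_prop)).intervalIntegrable 0 1)).symm

theorem le_mul_inner_segmentAverage_apply_self (hH : Continuous H) {v : E} {c k : ℝ}
    (h : ∀ τ ∈ Icc (0 : ℝ) 1, c ≤ k * ⟪v, H (x + τ • (y - x)) v⟫_ℝ) :
    c ≤ k * ⟪v, segmentAverage H x y v⟫_ℝ := by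
  have hcont : Continuous fun τ : ℝ => k * ⟪v, H (x + τ • (y - x)) v⟫_ℝ :=
    continuous_const.mul (continuous_const.inner
      ((hH.comp (by fun_prop : Continuous fun τ : ℝ => x + τ • (y - x))).clm_apply
        continuous_const))
  rw [inner_segmentAverage_apply hH, ← intervalIntegral.integral_const_mul]
  simpa using intervalIntegral.integral_mono_on (μ := MeasureTheory.volume) zero_le_one
    intervalIntegrable_const (hcont.intervalIntegrable 0 1) h

theorem mul_norm_sq_le_inner_segmentAverage_apply {μ : ℝ} (hH : Continuous H) {v : E}
    (hcoer : ∀ z, μ * ‖v‖ ^ 2 ≤ ⟪v, H z v⟫_ℝ) : μ * ‖v‖ ^ 2 ≤ ⟪v, segmentAverage H x y v⟫_ℝ := by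
  simpa using le_mul_inner_segmentAverage_apply_self (k := 1) hH fun τ _ => by
    simpa using hcoer (x + τ • (y - x))

theorem inner_apply_le_one_add_mul_inner_segmentAverage_apply {μ M c : ℝ}
    (hH : Continuous H) (hcoer : ∀ z v, μ * ‖v‖ ^ 2 ≤ ⟪v, H z v⟫_ℝ)
    (hlip : ∀ z w, ‖H z - H w‖ ≤ M * ‖z - w‖) (hM : 0 ≤ M) (hc : 0 ≤ c)
    (hxy : M * ‖x - y‖ ≤ c * μ) {t : ℝ} (ht : t ∈ Icc (0 : ℝ) 1) (v : E) :
    ⟪v, H (x + t • (y - x)) v⟫_ℝ ≤ (1 + c) * ⟪v, segmentAverage H x y v⟫_ℝ := by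
  have hdist : ∀ τ ∈ Icc (0 : ℝ) 1, ‖x + t • (y - x) - (x + τ • (y - x))‖ ≤ ‖x - y‖ := by
    intro τ hτ
    rw [add_sub_add_left_eq_sub, ← sub_smul, norm_smul, norm_sub_rev y x]
    exact mul_le_of_le_one_left (norm_nonneg _) (Real.dist_le_of_mem_Icc_01 ht hτ)
  exact le_mul_inner_segmentAverage_apply_self hH fun τ hτ =>
    inner_apply_le_one_add_mul_of_norm_sub_le hc (hcoer _)
      ((hlip _ _).trans ((mul_le_mul_of_nonneg_left (hdist τ hτ) hM).trans hxy)) v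

end SegmentAverage

namespace Matrix

variable {n : Type*} [Fintype n] [DecidableEq n]

section SegmentAverage

variable {E : Type*} [NormedAddCommGroup E] [NormedSpace ℝ E]

theorem toEuclideanCLM_segmentAverage (F : E → Matrix n n ℝ) (x y : E) :
    toEuclideanCLM (𝕜 := ℝ) (segmentAverage F x y)
      = segmentAverage (fun z => toEuclideanCLM (𝕜 := ℝ) (F z)) x y :=
  (LinearIsometry.intervalIntegral_comp_comm
    ⟨(toEuclideanCLM (𝕜 := ℝ) (n := n)).toAlgEquiv.toLinearMap, fun _ => rfl⟩ _).symm

theorem isHermitian_segmentAverage {F : E → Matrix n n ℝ} (hF : ∀ z, (F z).IsHermitian) (x y : E) :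
    (segmentAverage F x y).IsHermitian := by
  have := LinearIsometry.intervalIntegral_comp_comm (a := 0) (b := 1) (μ := MeasureTheory.volume)
    ⟨(transposeLinearEquiv n n ℝ ℝ).toLinearMap, fun A => by
      simpa [conjTranspose_eq_transpose_of_trivial] using l2_opNorm_conjTranspose A⟩
    (fun τ => F (x + τ • (y - x)))
  rw [IsHermitian, conjTranspose_eq_transpose_of_trivial, segmentAverage]
  simpa [← conjTranspose_eq_transpose_of_trivial, (hF _).eq] using this.symm

end SegmentAverage

theorem IsHermitian.inner_toEuclideanCLM_left_eq_right {A : Matrix n n ℝ} (hA : A.IsHermitian)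
    (v w : EuclideanSpace ℝ n) :
    ⟪toEuclideanCLM (𝕜 := ℝ) A v, w⟫_ℝ = ⟪v, toEuclideanCLM (𝕜 := ℝ) A w⟫_ℝ :=
  isSymmetric_toEuclideanLin_iff.mpr hA v w

theorem PosSemidef.mul_norm_sq_le_inner_toEuclideanCLM {A : Matrix n n ℝ} {μ : ℝ}
    (h : (A - μ • 1).PosSemidef) (v : EuclideanSpace ℝ n) :
    μ * ‖v‖ ^ 2 ≤ ⟪v, toEuclideanCLM (𝕜 := ℝ) A v⟫_ℝ := by
  have := (isPositive_toEuclideanLin_iff.mpr h).inner_nonneg_right v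
  rw [← coe_toEuclideanCLM_eq_toEuclideanLin, map_sub, map_smul, map_one] at this
  simp only [ContinuousLinearMap.toLinearMap_sub, ContinuousLinearMap.toLinearMap_smul,
    ContinuousLinearMap.toLinearMap_one, LinearMap.sub_apply, ContinuousLinearMap.coe_coe,
    LinearMap.smul_apply, Module.End.one_apply, inner_sub_right, real_inner_smul_right,
    real_inner_self_eq_norm_sq] at this
  linarith

theorem isUnit_of_forall_mul_norm_sq_le_inner {A : Matrix n n ℝ} {μ : ℝ} (hμ : 0 < μ)
    (h : ∀ v, μ * ‖v‖ ^ 2 ≤ ⟪v, toEuclideanCLM (𝕜 := ℝ) A v⟫_ℝ) : IsUnit A := by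
  refine (isUnit_map_iff (toEuclideanCLM (𝕜 := ℝ) (n := n)) A).mp
    (ContinuousLinearMap.isUnit_of_forall_le_norm_inner_map _ (c := ⟨μ, hμ.le⟩) hμ fun v => ?_)
  rw [real_inner_comm, Real.norm_eq_abs, mul_comm]
  exact (h v).trans (le_abs_self _)

theorem toEuclideanCLM_nonsing_inv_apply_apply {A : Matrix n n ℝ} (hA : IsUnit A)
    (v : EuclideanSpace ℝ n) :
    toEuclideanCLM (𝕜 := ℝ) A⁻¹ (toEuclideanCLM (𝕜 := ℝ) A v) = v := by
  rw [← mul_apply_eq_comp, ← map_mul, nonsing_inv_mul A ((isUnit_iff_isUnit_det A).mp hA),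
    map_one, one_apply_eq_self]

theorem toEuclideanCLM_apply_nonsing_inv_apply {A : Matrix n n ℝ} (hA : IsUnit A)
    (v : EuclideanSpace ℝ n) :
    toEuclideanCLM (𝕜 := ℝ) A (toEuclideanCLM (𝕜 := ℝ) A⁻¹ v) = v := by
  rw [← mul_apply_eq_comp, ← map_mul, mul_nonsing_inv A ((isUnit_iff_isUnit_det A).mp hA),
    map_one, one_apply_eq_self]

end Matrix

/-- FTC identity `∇f(x) = G (x - x_*)` and the Taylor/Lagrange representation
`f(x) - f(x_*) = (1/2) ∇f(x)ᵀ G⁻¹ ∇²f(x + τ̃(x_* - x)) G⁻¹ ∇f(x)`, together with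
the bound by `((1+C)²/2) ∇f(x)ᵀ (∇²f(x_*))⁻¹ ∇f(x)`. -/
theorem suboptimality_representation {d : ℕ}
    (f : EuclideanSpace ℝ (Fin d) → ℝ) (μ M : ℝ) (hμ : 0 < μ) (hM : 0 < M)
    (Hess : EuclideanSpace ℝ (Fin d) → Matrix (Fin d) (Fin d) ℝ)
    (hf : ContDiff ℝ 2 f)
    (hHess : ∀ z, HasFDerivAt (gradient f) (Matrix.toEuclideanCLM (𝕜 := ℝ) (Hess z)) z)
    (hsymm : ∀ z, (Hess z).IsHermitian)
    (hstr : ∀ z, (Hess z - μ • (1 : Matrix (Fin d) (Fin d) ℝ)).PosSemidef)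
    (hlipH : ∀ z w, ‖Hess z - Hess w‖ ≤ M * ‖z - w‖)
    (xs : EuclideanSpace ℝ (Fin d)) (hmin : ∀ y, f xs ≤ f y)
    (x : EuclideanSpace ℝ (Fin d))
    (G : Matrix (Fin d) (Fin d) ℝ)
    (hG : G = ∫ τ in (0:ℝ)..1, Hess (x + τ • (xs - x)))
    (C : ℝ) (hC : C = (M / μ ^ ((3:ℝ)/2)) * Real.sqrt (2 * (f x - f xs))) :
    gradient f x = Matrix.toEuclideanCLM (𝕜 := ℝ) G (x - xs) ∧
    ∃ τ ∈ Set.Icc (0:ℝ) 1,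
      f x - f xs = (1 / 2) * ⟪gradient f x,
          Matrix.toEuclideanCLM (𝕜 := ℝ) G⁻¹
            (Matrix.toEuclideanCLM (𝕜 := ℝ) (Hess (x + τ • (xs - x)))
              (Matrix.toEuclideanCLM (𝕜 := ℝ) G⁻¹ (gradient f x)))⟫_ℝ ∧
      f x - f xs ≤ ((1 + C) ^ 2 / 2) * ⟪gradient f x,
          Matrix.toEuclideanCLM (𝕜 := ℝ) (Hess xs)⁻¹ (gradient f x)⟫_ℝ := by
  open Matrix in
  set H := fun z => toEuclideanCLM (𝕜 := ℝ) (Hess z) with hH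
  have hlip : ∀ z w, ‖H z - H w‖ ≤ M * ‖z - w‖ := fun z w => by
    rw [hH, ← map_sub]; exact hlipH z w
  have hHc : Continuous H := (LipschitzWith.of_dist_le_mul (K := M.toNNReal) fun z w => by
    rw [dist_eq_norm, dist_eq_norm, Real.coe_toNNReal _ hM.le]; exact hlip z w).continuous
  have hcoer : ∀ z v, μ * ‖v‖ ^ 2 ≤ ⟪v, H z v⟫_ℝ :=
    fun z => (hstr z).mul_norm_sq_le_inner_toEuclideanCLM
  have hGH : toEuclideanCLM (𝕜 := ℝ) G = segmentAverage H x xs :=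
    hG ▸ toEuclideanCLM_segmentAverage Hess x xs
  have hgrad0 : gradient f xs = 0 := IsLocalMin.gradient_eq_zero (.of_forall hmin)
  have hgrad : gradient f x = toEuclideanCLM (𝕜 := ℝ) G (x - xs) :=
    hGH ▸ gradient_eq_segmentAverage_apply_of_gradient_eq_zero hHess hHc hgrad0 x
  have hGherm : G.IsHermitian := hG ▸ isHermitian_segmentAverage hsymm x xs
  have hGunit : IsUnit G := isUnit_of_forall_mul_norm_sq_le_inner hμ fun v =>
    hGH ▸ mul_norm_sq_le_inner_segmentAverage_apply hHc (hcoer · v)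
  have hGinv : toEuclideanCLM (𝕜 := ℝ) G⁻¹ (gradient f x) = x - xs := by
    rw [hgrad, toEuclideanCLM_nonsing_inv_apply_apply hGunit]
  obtain ⟨τ, hτ, hgap⟩ := exists_sub_eq_half_inner_of_gradient_eq_zero
    (hf.differentiable two_ne_zero) hHess hgrad0 x
  have hMC : M * ‖x - xs‖ ≤ C * μ := hC ▸ mul_le_div_rpow_mul_sqrt_mul hμ hM.le (norm_nonneg _)
    (by linarith [hcoer (x + τ • (xs - x)) (x - xs)])
  have hC0 : 0 ≤ C := by rw [hC]; positivity
  have hcomp : ∀ t ∈ Icc (0 : ℝ) 1,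
      ⟪x - xs, H (x + t • (xs - x)) (x - xs)⟫_ℝ ≤ (1 + C) * ⟪x - xs, gradient f x⟫_ℝ :=
    fun t ht => hgrad ▸ hGH ▸ inner_apply_le_one_add_mul_inner_segmentAverage_apply hHc hcoer
      hlip hM.le hC0 hMC ht (x - xs)
  refine ⟨hgrad, τ, hτ, ?_, ?_⟩
  · rw [hGinv, ← hGherm.inv.inner_toEuclideanCLM_left_eq_right, hGinv, hgap]
    ring
  · have hpos : (H xs).IsPositive := isPositive_toEuclideanLin_iff.mpr
      (by simpa using (hstr xs).add (PosSemidef.one.smul hμ.le))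
    have hunit : IsUnit (Hess xs) := isUnit_of_forall_mul_norm_sq_le_inner hμ (hcoer xs)
    have key := hpos.inner_apply_self_le_sq_mul (by linarith) (hcomp τ hτ)
      (by simpa using hcomp 1 ⟨zero_le_one, le_rfl⟩)
      (toEuclideanCLM_apply_nonsing_inv_apply hunit _)
    linarith
end
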